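/- arXiv:0708.2572 — 3 statements merged into one kernel-verified Lean document; each statement's English description precedes it below -/
import Mathlib

section
/- If a positive sequence a_1, a_2, ..., a_n satisfies the ratio monotone property (i.e., a_1/a_n < a_2/a_{n-1} < ... and a_n/a_2 < a_{n-1}/a_3 < ...), then it is log-concave: a_i/a_{i+1} is strictly increasing in i, i.e., a_{i-1} a_{i+1} < a_i^2 for all 1 < i < n. -/
/-- Multiplying the two hypotheses cancels `p` and `q`, leaving `x / y < y / z`. -/
lemma mul_lt_sq_of_div_lt_div_of_div_lt_div {K : Type*} [Field K] [LinearOrder K]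
    [IsStrictOrderedRing K] {x y z p q : K} (hx : 0 ≤ x) (hy : 0 < y) (hz : 0 < z)
    (hp : 0 < p) (hq : 0 < q) (h₁ : x / q < y / p) (h₂ : q / y < p / z) :
    x * z < y ^ 2 := by
  have hratio : x / y < y / z :=
    calc x / y = x / q * (q / y) := by field_simp
      _ < y / p * (p / z) := mul_lt_mul'' h₁ h₂ (by positivity) (by positivity)
      _ = y / z := by field_simp
  rwa [div_lt_div_iff₀ hy hz, ← sq] at hratio

theorem stmt_3 (n : ℕ) (a : ℕ → ℝ)
    (hpos : ∀ i, 1 ≤ i → i ≤ n → 0 < a i)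
    (h1 : ∀ i, 2 ≤ i → i ≤ n - 1 → a (i - 1) / a (n + 2 - i) < a i / a (n + 1 - i))
    (h2 : ∀ i, 2 ≤ i → i ≤ n - 1 → a (n + 2 - i) / a i < a (n + 1 - i) / a (i + 1)) :
    ∀ i, 1 < i → i < n → a (i - 1) * a (i + 1) < a i ^ 2 := by
  intro i hi hin
  exact mul_lt_sq_of_div_lt_div_of_div_lt_div (hpos _ (by omega) (by omega)).le
    (hpos _ (by omega) (by omega)) (hpos _ (by omega) (by omega))
    (hpos _ (by omega) (by omega)) (hpos _ (by omega) (by omega))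
    (h1 i hi (by omega)) (h2 i hi (by omega))
end

section
/- For n ≥ 2, the degree of the polynomial d_n(q) equals binom(n,2) if n is even, and binom(n,2) - 1 if n is odd. -/
open Polynomial

/-- The q-derangement polynomial, defined by the recursion
`d_n(q) = (1+q+⋯+q^{n-1}) d_{n-1}(q) + (-1)^n q^{C(n,2)}` for `n ≥ 2`, with `d_1(q) = 0`. -/
noncomputable def dq : ℕ → Polynomial ℤ
  | 0 => 0
  | 1 => 0
  | (n + 2) =>
      (∑ i ∈ Finset.range (n + 2), X ^ i) * dq (n + 1)
        + (-1) ^ (n + 2) * X ^ ((n + 2).choose 2)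

/-- `A n k` is the coefficient of `q^k` in `d_n(q)`. -/
noncomputable def A (n k : ℕ) : ℤ := (dq n).coeff k

/-!
For even `n` the term `q^{C(n,2)}` lies above `[n]_q d_{n-1}`, so `d_n` is monic of degree
`C(n,2)`. For odd `n` the monic product `[n]_q d_{n-1}` has degree `C(n,2)` and its leading term
is cancelled by `-q^{C(n,2)}`; the next coefficient is the sum of the top two coefficients of
`d_{n-1}`. Tracking the coefficient just below the top of `d_{2m+2}` shows it equals `m`, so the
leading coefficient of `d_{2m+3}` is `m + 1 ≠ 0` and no further cancellation occurs.
-/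

section GeomSum

variable {R : Type*} [Semiring R]

lemma Polynomial.IsMonicOfDegree.coeff_eq_one {p : R[X]} {n : ℕ} (hp : IsMonicOfDegree p n) :
    p.coeff n = 1 :=
  hp.natDegree_eq ▸ hp.monic.coeff_natDegree

lemma isMonicOfDegree_geomSum_X [Nontrivial R] (k : ℕ) :
    IsMonicOfDegree (∑ i ∈ Finset.range (k + 1), (X : R[X]) ^ i) k := by
  induction k with
  | zero => simp
  | succ k ih =>
    rw [Finset.sum_range_succ]
    exact .add_left (ih.natDegree_eq.trans_lt k.lt_succ_self) (isMonicOfDegree_X_pow R (k + 1))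

lemma coeff_geomSum_X_mul_add [Nontrivial R] {p : R[X]} {D : ℕ} (k : ℕ)
    (hp : p.natDegree ≤ D) :
    ((∑ i ∈ Finset.range (k + 1), (X : R[X]) ^ i) * p).coeff (k + D) = p.coeff D := by
  have hS := isMonicOfDegree_geomSum_X (R := R) k
  rw [coeff_mul_add_eq_of_natDegree_le hS.natDegree_eq.le hp, hS.coeff_eq_one, one_mul]

lemma coeff_geomSum_X_mul_add_succ [Nontrivial R] {p : R[X]} {D : ℕ} (k : ℕ)
    (hp : p.natDegree ≤ D + 1) :
    ((∑ i ∈ Finset.range (k + 2), (X : R[X]) ^ i) * p).coeff (k + 1 + D)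
      = p.coeff (D + 1) + p.coeff D := by
  rw [Finset.sum_range_succ, add_mul, coeff_add, show k + 1 + D = k + (D + 1) by ring,
    coeff_geomSum_X_mul_add k hp, show k + (D + 1) = D + (k + 1) by ring, coeff_X_pow_mul]

end GeomSum

lemma Nat.choose_two_add_one (n : ℕ) : (n + 1).choose 2 = n.choose 2 + n := by
  simp [Nat.choose_succ_succ', add_comm]

lemma dq_two : dq 2 = X := by
  simp [dq, Finset.sum_range_succ]

lemma dq_two_mul_add_two (m : ℕ) :
    dq (2 * m + 2) = (∑ i ∈ Finset.range (2 * m + 2), X ^ i) * dq (2 * m + 1)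
      + X ^ ((2 * m + 2).choose 2) := by
  rw [dq, Even.neg_one_pow ⟨m + 1, by ring⟩, one_mul]

lemma dq_two_mul_add_three (m : ℕ) :
    dq (2 * m + 3) = (∑ i ∈ Finset.range (2 * m + 3), X ^ i) * dq (2 * m + 2)
      - X ^ ((2 * m + 3).choose 2) := by
  rw [dq, Odd.neg_one_pow ⟨m + 1, by ring⟩, neg_one_mul, ← sub_eq_add_neg]

lemma natDegree_and_leadingCoeff_dq_two_mul_add_three {m : ℕ}
    (hmonic : IsMonicOfDegree (dq (2 * m + 2)) ((2 * m + 2).choose 2))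
    (hsub : (dq (2 * m + 2)).coeff ((2 * m + 2).choose 2 - 1) = m) :
    (dq (2 * m + 3)).natDegree = (2 * m + 3).choose 2 - 1 ∧
      (dq (2 * m + 3)).leadingCoeff = m + 1 := by
  obtain ⟨D, hD⟩ : ∃ D, (2 * m + 2).choose 2 = D + 1 :=
    ⟨_, (Nat.succ_pred_eq_of_pos (Nat.choose_pos (by omega))).symm⟩
  rw [hD] at hmonic
  rw [hD, Nat.add_sub_cancel] at hsub
  have hN : (2 * m + 3).choose 2 = 2 * m + 2 + (D + 1) := by
    rw [Nat.choose_two_add_one, hD]; ring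
  have hprod := (isMonicOfDegree_geomSum_X (2 * m + 2)).mul hmonic
  have hlt : (dq (2 * m + 3)).natDegree < 2 * m + 2 + (D + 1) := by
    rw [dq_two_mul_add_three, hN]
    exact hprod.natDegree_sub_X_pow (by omega)
  have hcoeff : (dq (2 * m + 3)).coeff (2 * m + 2 + D) = m + 1 := by
    rw [dq_two_mul_add_three, coeff_sub, coeff_X_pow, if_neg (by omega), sub_zero,
      show 2 * m + 2 + D = 2 * m + 1 + 1 + D by ring,
      coeff_geomSum_X_mul_add_succ _ hmonic.natDegree_eq.le, hmonic.coeff_eq_one, hsub,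
      add_comm]
  have hdeg : (dq (2 * m + 3)).natDegree = 2 * m + 2 + D :=
    natDegree_eq_of_le_of_coeff_ne_zero (by omega) (by omega)
  exact ⟨by omega, by rw [leadingCoeff, hdeg, hcoeff]⟩

lemma isMonicOfDegree_and_coeff_sub_one_dq_two_mul_add_four {m : ℕ}
    (hdeg : (dq (2 * m + 3)).natDegree = (2 * m + 3).choose 2 - 1)
    (hlead : (dq (2 * m + 3)).leadingCoeff = m + 1) :
    IsMonicOfDegree (dq (2 * m + 4)) ((2 * m + 4).choose 2) ∧
      (dq (2 * m + 4)).coeff ((2 * m + 4).choose 2 - 1) = m + 1 := by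
  have hpos : 0 < (2 * m + 3).choose 2 := Nat.choose_pos (by omega)
  have hN : (2 * m + 4).choose 2 = 2 * m + 3 + ((2 * m + 3).choose 2 - 1) + 1 := by
    rw [Nat.choose_two_add_one]; omega
  have hrec : dq (2 * m + 4) = (∑ i ∈ Finset.range (2 * m + 4), X ^ i) * dq (2 * m + 3)
      + X ^ ((2 * m + 4).choose 2) := dq_two_mul_add_two (m + 1)
  have hprod : ((∑ i ∈ Finset.range (2 * m + 4), X ^ i) * dq (2 * m + 3)).natDegree
      ≤ 2 * m + 3 + ((2 * m + 3).choose 2 - 1) :=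
    natDegree_mul_le.trans
      (add_le_add (isMonicOfDegree_geomSum_X (2 * m + 3)).natDegree_eq.le hdeg.le)
  rw [hrec]
  refine ⟨.add_left (by omega) (isMonicOfDegree_X_pow ℤ _), ?_⟩
  rw [coeff_add, coeff_X_pow, if_neg (by omega), add_zero, hN, Nat.add_sub_cancel,
    coeff_geomSum_X_mul_add _ hdeg.le, ← hdeg, coeff_natDegree, hlead]

lemma isMonicOfDegree_and_coeff_sub_one_dq_two_mul_add_two (m : ℕ) :
    IsMonicOfDegree (dq (2 * m + 2)) ((2 * m + 2).choose 2) ∧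
      (dq (2 * m + 2)).coeff ((2 * m + 2).choose 2 - 1) = m := by
  induction m with
  | zero => simpa [dq_two] using isMonicOfDegree_X ℤ
  | succ m ih =>
    obtain ⟨hdeg, hlead⟩ := natDegree_and_leadingCoeff_dq_two_mul_add_three ih.1 ih.2
    exact_mod_cast isMonicOfDegree_and_coeff_sub_one_dq_two_mul_add_four hdeg hlead

theorem stmt_5 (n : ℕ) (hn : 2 ≤ n) :
    (dq n).natDegree = if Even n then n.choose 2 else n.choose 2 - 1 := by
  obtain ⟨m, rfl | rfl⟩ : ∃ m, n = 2 * m + 2 ∨ n = 2 * m + 3 := ⟨(n - 2) / 2, by omega⟩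
  · rw [if_pos ⟨m + 1, by ring⟩]
    exact (isMonicOfDegree_and_coeff_sub_one_dq_two_mul_add_two m).1.natDegree_eq
  · obtain ⟨hmonic, hsub⟩ := isMonicOfDegree_and_coeff_sub_one_dq_two_mul_add_two m
    rw [if_neg (Nat.not_even_iff_odd.mpr ⟨m + 1, by ring⟩)]
    exact (natDegree_and_leadingCoeff_dq_two_mul_add_three hmonic hsub).1
end

section
/- For even m ≥ 6, with β_m = binom(m,2), the coefficient of q^{β_m - 2} in d_m(q) equals m²/4 - m/2. -/
open Polynomial

/-! Write `β_n = C(n,2)`, so `β_{n+1} = β_n + n` and `deg d_n ≤ β_n`. For `r ≤ n`, the coefficient of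
`q^{β_{n+1} - r}` in `(1 + ⋯ + q^n) d_n` is the sum of the top `r + 1` coefficients of `d_n`. Hence the
top three coefficients `a_n, b_n, c_n` satisfy `a_{n+1} = a_n + (-1)^{n+1}`, `b_{n+1} = a_n + b_n`,
`c_{n+1} = a_n + b_n + c_n`, which solve to `2 a_n = 1 + (-1)^n`, `4 b_n = 2n - 3 - (-1)^n` and
`8 c_n = 2(n-1)^2 - 1 - (-1)^n`. -/

open Finset

lemma Polynomial.coeff_geom_sum_mul_of_le {R : Type*} [Semiring R] {p : R[X]} {N n r : ℕ}
    (hp : p.natDegree ≤ N) (hrn : r ≤ n) (hrN : r ≤ N) :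
    ((∑ i ∈ range (n + 1), X ^ i) * p).coeff (N + n - r) = ∑ i ∈ range (r + 1), p.coeff (N - i) := by
  rw [sum_mul, finsetSum_coeff, show n + 1 = (n - r) + (r + 1) by omega, sum_range_add]
  have hlow : ∑ i ∈ range (n - r), (X ^ i * p).coeff (N + n - r) = 0 :=
    sum_eq_zero fun i hi => by
      rw [mem_range] at hi
      rw [coeff_X_pow_mul', if_pos (by omega)]
      exact coeff_eq_zero_of_natDegree_lt (by omega)
  rw [hlow, zero_add]
  refine sum_congr rfl fun i hi => ?_
  rw [mem_range] at hi
  rw [coeff_X_pow_mul', if_pos (by omega)]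
  congr 1
  omega

lemma choose_two_succ (n : ℕ) : (n + 1).choose 2 = n + n.choose 2 := by
  rw [Nat.choose_succ_succ', Nat.choose_one_right]

lemma Polynomial.coeff_neg_one_pow_mul_X_pow {R : Type*} [Ring R] (k c j : ℕ) :
    ((-1 : R[X]) ^ k * X ^ c).coeff j = if j = c then (-1) ^ k else 0 := by
  rw [← coeff_C_mul_X_pow, C_pow, C_neg, C_1]

lemma natDegree_dq_le (n : ℕ) : (dq n).natDegree ≤ n.choose 2 := by
  induction n with
  | zero => simp [dq]
  | succ n ih =>
    cases n with
    | zero => simp [dq]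
    | succ n =>
      rw [dq]
      refine natDegree_add_le_of_degree_le ?_ ?_
      · rw [choose_two_succ (n + 1)]
        refine natDegree_mul_le_of_le (natDegree_sum_le_of_forall_le _ _ fun i hi => ?_) ih
        rw [natDegree_X_pow]
        exact Nat.lt_succ_iff.mp (mem_range.mp hi)
      · simp

lemma coeff_dq_succ_choose_two_sub {n r : ℕ} (hn : 1 ≤ n) (hrn : r ≤ n) (hr : r ≤ n.choose 2) :
    (dq (n + 1)).coeff ((n + 1).choose 2 - r)
      = ∑ i ∈ range (r + 1), (dq n).coeff (n.choose 2 - i) + if r = 0 then (-1) ^ (n + 1) else 0 := by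
  obtain ⟨k, rfl⟩ : ∃ k, n = k + 1 := ⟨n - 1, by omega⟩
  have hc := choose_two_succ (k + 1)
  rw [dq, coeff_add, coeff_neg_one_pow_mul_X_pow, hc]
  congr 1
  · rw [show k + 1 + (k + 1).choose 2 - r = (k + 1).choose 2 + (k + 1) - r by omega]
    exact coeff_geom_sum_mul_of_le (natDegree_dq_le _) hrn hr
  · congr 1
    simp only [eq_iff_iff]
    omega

lemma two_mul_coeff_dq_choose_two {n : ℕ} (hn : 1 ≤ n) :
    2 * (dq n).coeff (n.choose 2) = 1 + (-1) ^ n := by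
  induction n, hn using Nat.le_induction with
  | base => simp [dq]
  | succ n hn ih =>
    have h := coeff_dq_succ_choose_two_sub hn n.zero_le (n.choose 2).zero_le
    simp only [zero_add, sum_range_one, Nat.sub_zero, if_true] at h
    rw [h]
    linear_combination ih

lemma four_mul_coeff_dq_choose_two_sub_one {n : ℕ} (hn : 2 ≤ n) :
    4 * (dq n).coeff (n.choose 2 - 1) = 2 * n - 3 - (-1) ^ n := by
  induction n, hn using Nat.le_induction with
  | base => simp [dq]
  | succ n hn ih =>
    have h := coeff_dq_succ_choose_two_sub (r := 1) (by omega) (by omega)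
      (Nat.choose_pos (k := 2) hn)
    simp only [sum_range_succ, sum_range_zero, zero_add, Nat.sub_zero, one_ne_zero, if_false,
      add_zero] at h
    rw [h]
    push_cast
    linear_combination ih + 2 * two_mul_coeff_dq_choose_two (n := n) (by omega)

lemma eight_mul_coeff_dq_choose_two_sub_two {n : ℕ} (hn : 3 ≤ n) :
    8 * (dq n).coeff (n.choose 2 - 2) = 2 * (n - 1) ^ 2 - 1 - (-1) ^ n := by
  induction n, hn using Nat.le_induction with
  | base => simp [dq, sum_range_succ, coeff_neg_one_pow_mul_X_pow]
  | succ n hn ih =>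
    have h := coeff_dq_succ_choose_two_sub (r := 2) (by omega) (by omega)
      ((Nat.choose_le_choose 2 hn).trans' (by decide))
    simp only [sum_range_succ, sum_range_zero, zero_add, Nat.sub_zero, two_ne_zero, if_false,
      add_zero] at h
    rw [h]
    push_cast
    linear_combination ih + 4 * two_mul_coeff_dq_choose_two (n := n) (by omega)
      + 2 * four_mul_coeff_dq_choose_two_sub_one (n := n) (by omega)

theorem stmt_11 (m : ℕ) (hm : 6 ≤ m) (he : Even m) :
    (A m (m.choose 2 - 2) : ℚ) = (m : ℚ) ^ 2 / 4 - (m : ℚ) / 2 := by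
  have h : (8 * A m (m.choose 2 - 2) : ℚ) = 2 * (m - 1) ^ 2 - 1 - (-1) ^ m := by
    exact_mod_cast eight_mul_coeff_dq_choose_two_sub_two (by omega)
  rw [he.neg_one_pow] at h
  linear_combination h / 8
end
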